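/- Let S be a finite collection of pairwise disjoint chains and let ~ be the smallest equivalence relation on S under which any two linked chains are equivalent. If C, C′, D ∈ S with C ~ C′, and there are entries x ∈ C, y ∈ C′ and z ∈ D with x > z > y, then D ~ C. Consequently, when all entries of S are listed in decreasing order, the entries belonging to the chains of any single equivalence class occupy a set of consecutive positions. -/

import Mathlib

/-- The maximum entry of a finite set of integers (`0` for the empty set). -/
def fmax (C : Finset ℤ) : ℤ := WithBot.unbotD 0 C.max

/-- The minimum entry of a finite set of integers (`0` for the empty set). -/
def fmin (C : Finset ℤ) : ℤ := WithTop.untopD 0 C.min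

/-- A *chain* is a nonempty set of integers of the form `{c, c-2, …, c-2k}`. -/
def IsChainSet (C : Finset ℤ) : Prop :=
  ∃ (c : ℤ) (k : ℕ), C = (Finset.range (k + 1)).image (fun i : ℕ => c - 2 * (i : ℤ))

/-- Two chains with disjoint entries, with maxima `A, B` and minima `a, b`, are *linked*
if `A > B > a` or `B > A > b`. -/
def LinkedChains (C D : Finset ℤ) : Prop :=
  Disjoint C D ∧
    ((fmax D < fmax C ∧ fmin C < fmax D) ∨ (fmax C < fmax D ∧ fmin D < fmax C))

/-- The set of all entries of a collection of chains. -/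
def entriesOf (S : Finset (Finset ℤ)) : Finset ℤ := S.biUnion id

/-- A finite collection of pairwise disjoint chains. -/
def IsChainCollection (S : Finset (Finset ℤ)) : Prop :=
  (∀ C ∈ S, IsChainSet C) ∧ ∀ C ∈ S, ∀ D ∈ S, C ≠ D → Disjoint C D

/-- A collection of pairwise disjoint chains is *interlaced* if any two of its chains are
joined by a finite sequence of chains of the collection in which consecutive chains are
linked. -/
def Interlaced (S : Finset (Finset ℤ)) : Prop :=
  ∀ C ∈ S, ∀ D ∈ S,
    Relation.ReflTransGen (fun X Y => X ∈ S ∧ Y ∈ S ∧ LinkedChains X Y) C D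

/-- An *admissible configuration of size `n`*: an interlaced collection of pairwise disjoint
chains of positive integers with `n` entries in total and smallest entry equal to `1`. -/
def AdmissibleConfig (n : ℕ) (S : Finset (Finset ℤ)) : Prop :=
  IsChainCollection S ∧ Interlaced S ∧ (entriesOf S).card = n ∧
    (∀ x ∈ entriesOf S, 0 < x) ∧ (1 : ℤ) ∈ entriesOf S

/-- The relation on a collection `S` generated by linkage: `C` and `D` are related when both
belong to `S` and are linked.  Its equivalence closure `Relation.EqvGen (linkRel S)` is the
smallest equivalence relation under which any two linked chains of `S` are equivalent. -/
def linkRel (S : Finset (Finset ℤ)) : Finset ℤ → Finset ℤ → Prop :=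
  fun X Y => X ∈ S ∧ Y ∈ S ∧ LinkedChains X Y

/-!
Follow a linkage path from `C` to `C'`: it starts at a chain whose maximum exceeds `z` and ends
at one whose minimum is below `z`. Stop at the first chain `E` whose successor has maximum `≤ z`
(or at the last chain). A link `A — B` with `max B < max A` has `min A < max B`, so
`min E ≤ z ≤ max E`. Either `E = D`, or `z ∉ E` gives `min E < z < max E`, and the chain `D ∋ z`,
disjoint from `E`, is then linked to `E` whichever of the two has the larger maximum.
-/

lemma IsChainSet.nonempty {C : Finset ℤ} (h : IsChainSet C) : C.Nonempty := by
  obtain ⟨c, k, rfl⟩ := h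
  exact Finset.nonempty_range_add_one.image _

lemma fmax_mem {C : Finset ℤ} (h : C.Nonempty) : fmax C ∈ C := by
  obtain ⟨m, hm⟩ := Finset.max_of_nonempty h
  simpa [fmax, hm] using Finset.mem_of_max hm

lemma fmin_mem {C : Finset ℤ} (h : C.Nonempty) : fmin C ∈ C := by
  obtain ⟨m, hm⟩ := Finset.min_of_nonempty h
  simpa [fmin, hm] using Finset.mem_of_min hm

lemma le_fmax {C : Finset ℤ} {x : ℤ} (hx : x ∈ C) : x ≤ fmax C := by
  obtain ⟨m, hm⟩ := Finset.max_of_mem hx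
  simpa [fmax, hm] using Finset.le_max_of_eq hx hm

lemma fmin_le {C : Finset ℤ} {x : ℤ} (hx : x ∈ C) : fmin C ≤ x := by
  obtain ⟨m, hm⟩ := Finset.min_of_mem hx
  simpa [fmin, hm] using Finset.min_le_of_eq hx hm

lemma LinkedChains.symm {C D : Finset ℤ} (h : LinkedChains C D) : LinkedChains D C :=
  ⟨h.1.symm, h.2.symm⟩

lemma LinkedChains.of_fmin_lt_of_lt_fmax {D E : Finset ℤ} {z : ℤ} (hDE : Disjoint D E)
    (hz : z ∈ D) (hEz : fmin E < z) (hzE : z < fmax E) : LinkedChains D E := by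
  have hE : E.Nonempty := Finset.nonempty_iff_ne_empty.2 fun h => by
    simp [h, fmin, fmax] at hEz hzE
    omega
  have hmax : fmax D ≠ fmax E := fun h =>
    Finset.disjoint_left.1 hDE (fmax_mem ⟨z, hz⟩) (h ▸ fmax_mem hE)
  refine ⟨hDE, ?_⟩
  rcases hmax.lt_or_gt with h | h
  · exact .inr ⟨h, hEz.trans_le (le_fmax hz)⟩
  · exact .inl ⟨h, (fmin_le hz).trans_lt hzE⟩

instance (S : Finset (Finset ℤ)) : Std.Symm (linkRel S) :=
  ⟨fun _ _ h => ⟨h.2.1, h.1, h.2.2.symm⟩⟩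

lemma exists_reflTransGen_linkRel_fmin_le_le_fmax {S : Finset (Finset ℤ)} {C C' : Finset ℤ}
    {z : ℤ} (hCC' : Relation.ReflTransGen (linkRel S) C C') (hC : C ∈ S)
    (hC'z : fmin C' < z) (hzC : z < fmax C) :
    ∃ E ∈ S, Relation.ReflTransGen (linkRel S) C E ∧ fmin E ≤ z ∧ z ≤ fmax E := by
  induction hCC' using Relation.ReflTransGen.head_induction_on with
  | refl => exact ⟨C', hC, .refl, hC'z.le, hzC.le⟩
  | @head A B hAB _ ih =>
    by_cases hzB : z < fmax B
    · obtain ⟨E, hE, hBE, hEz, hzE⟩ := ih hAB.2.1 hzB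
      exact ⟨E, hE, .head hAB hBE, hEz, hzE⟩
    · obtain ⟨hA, -, -, hlink⟩ := hAB
      rcases hlink with ⟨-, hAB⟩ | ⟨hAB, -⟩
      · exact ⟨A, hA, .refl, by omega, hzC.le⟩
      · omega

theorem eqvGen_linkRel_of_lt_of_lt {S : Finset (Finset ℤ)} (hS : IsChainCollection S)
    {C C' D : Finset ℤ} (hC : C ∈ S) (hD : D ∈ S) (hCC' : Relation.EqvGen (linkRel S) C C')
    {x y z : ℤ} (hx : x ∈ C) (hy : y ∈ C') (hz : z ∈ D) (hyz : y < z) (hzx : z < x) :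
    Relation.EqvGen (linkRel S) D C := by
  rw [Relation.EqvGen.eqvGen_eq_reflTransGen] at hCC' ⊢
  obtain ⟨E, hE, hCE, hEz, hzE⟩ := exists_reflTransGen_linkRel_fmin_le_le_fmax hCC' hC
    ((fmin_le hy).trans_lt hyz) (hzx.trans_le (le_fmax hx))
  obtain rfl | hne := eq_or_ne D E
  · exact symm hCE
  have hDE := hS.2 D hD E hE hne
  have hzE' : z ∉ E := Finset.disjoint_left.1 hDE hz
  have hEne := (hS.1 E hE).nonempty
  have hlink := LinkedChains.of_fmin_lt_of_lt_fmax hDE hz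
    (hEz.lt_of_ne fun h => hzE' (h ▸ fmin_mem hEne))
    (hzE.lt_of_ne fun h => hzE' (h ▸ fmax_mem hEne))
  exact .head ⟨hD, hE, hlink⟩ (symm hCE)

/-- From the proof of Proposition 3.1.  If `C ~ C'` under the linkage equivalence, and some
chain `D` of `S` has an entry `z` strictly between an entry `y` of `C'` and an entry `x` of
`C`, then `D ~ C`.  Consequently, the entries of the chains of any single equivalence class
occupy a set of consecutive positions in the decreasing listing of all entries: the class
entries form an order-convex subset of the set of all entries. -/
theorem linkage_class_consecutive (S : Finset (Finset ℤ)) (hS : IsChainCollection S) :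
    (∀ C ∈ S, ∀ C' ∈ S, ∀ D ∈ S,
        Relation.EqvGen (linkRel S) C C' →
        ∀ x ∈ C, ∀ y ∈ C', ∀ z ∈ D, y < z → z < x →
          Relation.EqvGen (linkRel S) D C) ∧
    (∀ C₀ ∈ S, ∀ x y z : ℤ,
        (∃ Cx ∈ S, Relation.EqvGen (linkRel S) C₀ Cx ∧ x ∈ Cx) →
        (∃ Cy ∈ S, Relation.EqvGen (linkRel S) C₀ Cy ∧ y ∈ Cy) →
        z ∈ entriesOf S → y < z → z < x →
          (∃ Cz ∈ S, Relation.EqvGen (linkRel S) C₀ Cz ∧ z ∈ Cz)) := by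
  refine ⟨fun C hC C' _ D hD hCC' x hx y hy z hz hyz hzx =>
    eqvGen_linkRel_of_lt_of_lt hS hC hD hCC' hx hy hz hyz hzx, ?_⟩
  rintro C₀ - x y z ⟨Cx, hCx, hC₀x, hx⟩ ⟨Cy, -, hC₀y, hy⟩ hz hyz hzx
  obtain ⟨D, hD, hzD⟩ := Finset.mem_biUnion.1 hz
  have hDx :=
    eqvGen_linkRel_of_lt_of_lt hS hCx hD (_root_.trans (symm hC₀x) hC₀y) hx hy hzD hyz hzx
  exact ⟨D, hD, _root_.trans hC₀x (symm hDx), hzD⟩
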